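/- arXiv:2510.13605 — 5 statements merged into one kernel-verified Lean document; each statement's English description precedes it below -/
import Mathlib

section
/- For α ∈ (0,1], λ ∈ [0,1], τ > 0, and β > 0, the GMOL cumulative distribution function F(x) = T(G(x)) is a valid distribution function on (0,∞): it is continuous and monotone nondecreasing on [0,∞), F(0) = 0, and F(x) tends to 1 as x tends to infinity. -/
/-! `F = T ∘ G`, where the Lomax CDF `G` is continuous, nonnegative and nondecreasing on `[0, ∞)`
with `G 0 = 0` and `G x → 1`, while the GMO transform `T` fixes `0` and `1` and is continuous and
nondecreasing on `[0, ∞)`: after clearing the positive denominators, `T z - T y` becomes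
`(z - y) (λ α + (1 - λ) (α (z + y) + (1 - α) z y))`. -/

open Set Filter Topology

noncomputable def lomaxCDF (τ β x : ℝ) : ℝ := 1 - (β / (β + x)) ^ τ

noncomputable def gmoTransform (α lam y : ℝ) : ℝ :=
  (lam * y + (1 - lam) * y ^ 2) / (α + (1 - α) * y)

section Lomax

variable {τ β : ℝ}

lemma lomaxCDF_zero (hβ : β ≠ 0) : lomaxCDF τ β 0 = 0 := by
  simp [lomaxCDF, div_self hβ]

lemma lomaxCDF_nonneg (hτ : 0 ≤ τ) (hβ : 0 ≤ β) {x : ℝ} (hx : 0 ≤ x) : 0 ≤ lomaxCDF τ β x := by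
  have hratio : β / (β + x) ≤ 1 := div_le_one_of_le₀ (by linarith) (by linarith)
  have hpow : (β / (β + x)) ^ τ ≤ 1 := Real.rpow_le_one (by positivity) hratio hτ
  simp only [lomaxCDF]
  linarith

lemma monotoneOn_lomaxCDF (hτ : 0 ≤ τ) (hβ : 0 < β) : MonotoneOn (lomaxCDF τ β) (Ici 0) := by
  intro a (ha : 0 ≤ a) b (hb : 0 ≤ b) hab
  have hratio : β / (β + b) ≤ β / (β + a) :=
    div_le_div_of_nonneg_left hβ.le (by linarith) (by linarith)
  have hpow : (β / (β + b)) ^ τ ≤ (β / (β + a)) ^ τ :=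
    Real.rpow_le_rpow (by positivity) hratio hτ
  simp only [lomaxCDF]
  linarith

lemma continuousOn_lomaxCDF (hτ : 0 ≤ τ) (hβ : 0 < β) : ContinuousOn (lomaxCDF τ β) (Ici 0) := by
  have hratio : ContinuousOn (fun x : ℝ => β / (β + x)) (Ici 0) :=
    continuousOn_const.div (by fun_prop) fun x (hx : 0 ≤ x) => by positivity
  exact continuousOn_const.sub (hratio.rpow_const fun _ _ => Or.inr hτ)

lemma tendsto_lomaxCDF_atTop (hτ : 0 < τ) : Tendsto (lomaxCDF τ β) atTop (𝓝 1) := by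
  have hratio : Tendsto (fun x : ℝ => β / (β + x)) atTop (𝓝 0) :=
    tendsto_const_nhds.div_atTop (tendsto_atTop_add_const_left _ β tendsto_id)
  have hpow := hratio.rpow_const (p := τ) (Or.inr hτ.le)
  rw [Real.zero_rpow hτ.ne'] at hpow
  change Tendsto (fun x => 1 - (β / (β + x)) ^ τ) atTop (𝓝 1)
  simpa using tendsto_const_nhds.sub hpow

end Lomax

section GMO

variable {α lam : ℝ}

lemma gmoTransform_zero : gmoTransform α lam 0 = 0 := by
  simp [gmoTransform]

lemma gmoTransform_one : gmoTransform α lam 1 = 1 := by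
  simp [gmoTransform]

lemma gmoTransform_denom_pos (hα : α ∈ Ioc 0 1) {y : ℝ} (hy : 0 ≤ y) :
    0 < α + (1 - α) * y := by
  have : 0 ≤ (1 - α) * y := mul_nonneg (by linarith [hα.2]) hy
  linarith [hα.1]

lemma continuousOn_gmoTransform (hα : α ∈ Ioc 0 1) :
    ContinuousOn (gmoTransform α lam) (Ici 0) :=
  ContinuousOn.div (by fun_prop) (by fun_prop) fun _ hy => (gmoTransform_denom_pos hα hy).ne'

lemma monotoneOn_gmoTransform (hα : α ∈ Ioc 0 1) (hlam : lam ∈ Icc 0 1) :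
    MonotoneOn (gmoTransform α lam) (Ici 0) := by
  intro y (hy : 0 ≤ y) z (hz : 0 ≤ z) hyz
  rw [gmoTransform, gmoTransform,
    div_le_div_iff₀ (gmoTransform_denom_pos hα hy) (gmoTransform_denom_pos hα hz)]
  obtain ⟨hα0, hα1⟩ := hα
  obtain ⟨hlam0, hlam1⟩ := hlam
  have hcross : (lam * z + (1 - lam) * z ^ 2) * (α + (1 - α) * y) -
      (lam * y + (1 - lam) * y ^ 2) * (α + (1 - α) * z) =
      (z - y) * (lam * α + (1 - lam) * (α * (z + y) + (1 - α) * (z * y))) := by ring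
  have hquad : 0 ≤ α * (z + y) + (1 - α) * (z * y) :=
    add_nonneg (mul_nonneg hα0.le (add_nonneg hz hy))
      (mul_nonneg (sub_nonneg.2 hα1) (mul_nonneg hz hy))
  have hdiff : 0 ≤ (z - y) * (lam * α + (1 - lam) * (α * (z + y) + (1 - α) * (z * y))) :=
    mul_nonneg (sub_nonneg.2 hyz)
      (add_nonneg (mul_nonneg hlam0 hα0.le) (mul_nonneg (sub_nonneg.2 hlam1) hquad))
  linarith

end GMO

/-- For α ∈ (0,1], λ ∈ [0,1], τ > 0, β > 0, the GMOL CDF F(x) = T(G(x)) is a valid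
distribution function on (0,∞): continuous and monotone nondecreasing on [0,∞),
F(0) = 0, and F(x) → 1 as x → ∞. -/
theorem gmol_cdf_valid (α lam τ β : ℝ) (hα : α ∈ Set.Ioc (0 : ℝ) 1)
    (hlam : lam ∈ Set.Icc (0 : ℝ) 1) (hτ : 0 < τ) (hβ : 0 < β) (F : ℝ → ℝ)
    (hF : ∀ x : ℝ, F x =
      (lam * (1 - (β / (β + x)) ^ τ) + (1 - lam) * (1 - (β / (β + x)) ^ τ) ^ 2) /
        (α + (1 - α) * (1 - (β / (β + x)) ^ τ))) :
    ContinuousOn F (Set.Ici 0) ∧ MonotoneOn F (Set.Ici 0) ∧ F 0 = 0 ∧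
      Filter.Tendsto F Filter.atTop (nhds 1) := by
  obtain rfl : F = gmoTransform α lam ∘ lomaxCDF τ β := funext hF
  have hmaps : MapsTo (lomaxCDF τ β) (Ici 0) (Ici 0) :=
    fun _ hx => lomaxCDF_nonneg hτ.le hβ.le hx
  refine ⟨(continuousOn_gmoTransform hα).comp (continuousOn_lomaxCDF hτ.le hβ) hmaps,
    (monotoneOn_gmoTransform hα hlam).comp (monotoneOn_lomaxCDF hτ.le hβ) hmaps, ?_, ?_⟩
  · simp [lomaxCDF_zero hβ.ne', gmoTransform_zero]
  · have hcont : ContinuousAt (gmoTransform α lam) 1 :=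
      (continuousOn_gmoTransform hα).continuousAt (Ici_mem_nhds one_pos)
    simpa [gmoTransform_one] using hcont.tendsto.comp (tendsto_lomaxCDF_atTop hτ)
end

section
/- For α ∈ (0,1], λ ∈ [0,1], and y ∈ (0,1], the GMO transform satisfies the iterated-series identity T(y) = y + Σ_{i=0}^∞ ( Σ_{j=0}^{i+1} ω_{i,j} y^{j+1} ), where ω_{i,j} = (-1)^j (λ - α)(1-α)^i C(i+1, j) and C(i+1, j) is the binomial coefficient; the outer series converges absolutely. -/
/-!
Each inner sum is a binomial expansion: it equals `(λ - α) y (1 - y) r ^ i` with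
`r = (1 - α)(1 - y) ∈ [0, 1)`. The outer series is therefore geometric with sum
`(λ - α) y (1 - y) / (1 - r)`, and `1 - r = α + (1 - α) y` is the denominator of the transform.
-/

open Finset

theorem one_sub_pow_eq_sum_range {R : Type*} [CommRing R] (y : R) (n : ℕ) :
    (1 - y) ^ n = ∑ j ∈ range (n + 1), (-1) ^ j * (n.choose j : R) * y ^ j := by
  rw [sub_eq_neg_add, add_pow]
  refine sum_congr rfl fun j _ => ?_
  rw [neg_pow, one_pow]
  ring

theorem gmo_inner_sum_eq {R : Type*} [CommRing R] (c a y : R) (i : ℕ) :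
    ∑ j ∈ range (i + 2), ((-1) ^ j * c * a ^ i * ((i + 1).choose j : R)) * y ^ (j + 1)
      = c * y * (1 - y) * (a * (1 - y)) ^ i := by
  have hbinom : c * a ^ i * y * (1 - y) ^ (i + 1)
      = ∑ j ∈ range (i + 2), ((-1) ^ j * c * a ^ i * ((i + 1).choose j : R)) * y ^ (j + 1) := by
    rw [one_sub_pow_eq_sum_range, mul_sum]
    refine sum_congr rfl fun j _ => ?_
    ring
  rw [← hbinom, mul_pow, pow_succ]
  ring

theorem hasSum_gmo_inner_sum {c a y : ℝ} (h : |a * (1 - y)| < 1) :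
    HasSum (fun i : ℕ => ∑ j ∈ range (i + 2),
        ((-1) ^ j * c * a ^ i * ((i + 1).choose j : ℝ)) * y ^ (j + 1))
      (c * y * (1 - y) / (1 - a * (1 - y))) := by
  simp only [gmo_inner_sum_eq, div_eq_mul_inv]
  exact (hasSum_geometric_of_abs_lt_one h).mul_left _

theorem gmo_transform_eq_add {α lam y : ℝ} (hden : α + (1 - α) * y ≠ 0) :
    (lam * y + (1 - lam) * y ^ 2) / (α + (1 - α) * y)
      = y + (lam - α) * y * (1 - y) / (1 - (1 - α) * (1 - y)) := by
  have h1r : 1 - (1 - α) * (1 - y) = α + (1 - α) * y := by ring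
  rw [h1r, div_eq_iff hden, add_mul, div_mul_cancel₀ _ hden]
  ring

theorem gmo_transform_iterated_series_general (α lam y : ℝ) (hα : α ∈ Set.Ioc (0 : ℝ) 1)
    (hy : y ∈ Set.Ioc (0 : ℝ) 1) :
    Summable (fun i : ℕ =>
      |∑ j ∈ Finset.range (i + 2),
        ((-1 : ℝ) ^ j * (lam - α) * (1 - α) ^ i * ((i + 1).choose j : ℝ)) * y ^ (j + 1)|) ∧
    (lam * y + (1 - lam) * y ^ 2) / (α + (1 - α) * y) =
      y + ∑' i : ℕ, ∑ j ∈ Finset.range (i + 2),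
        ((-1 : ℝ) ^ j * (lam - α) * (1 - α) ^ i * ((i + 1).choose j : ℝ)) * y ^ (j + 1) := by
  obtain ⟨hα0, hα1⟩ := hα
  obtain ⟨hy0, hy1⟩ := hy
  have hratio : |(1 - α) * (1 - y)| < 1 := by
    rw [abs_lt]
    constructor <;> nlinarith
  have hseries := hasSum_gmo_inner_sum (c := lam - α) hratio
  refine ⟨hseries.summable.abs, ?_⟩
  rw [hseries.tsum_eq, gmo_transform_eq_add (by nlinarith)]

/-- For α ∈ (0,1], λ ∈ [0,1], y ∈ (0,1], the GMO transform satisfies the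
iterated-series identity T(y) = y + Σ_i ( Σ_{j=0}^{i+1} ω_{i,j} y^{j+1} ),
with ω_{i,j} = (-1)^j (λ-α)(1-α)^i C(i+1,j); the outer series converges absolutely. -/
theorem gmo_transform_iterated_series (α lam y : ℝ) (hα : α ∈ Set.Ioc (0 : ℝ) 1)
    (hlam : lam ∈ Set.Icc (0 : ℝ) 1) (hy : y ∈ Set.Ioc (0 : ℝ) 1) :
    Summable (fun i : ℕ =>
      |∑ j ∈ Finset.range (i + 2),
        ((-1 : ℝ) ^ j * (lam - α) * (1 - α) ^ i * ((i + 1).choose j : ℝ)) * y ^ (j + 1)|) ∧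
    (lam * y + (1 - lam) * y ^ 2) / (α + (1 - α) * y) =
      y + ∑' i : ℕ, ∑ j ∈ Finset.range (i + 2),
        ((-1 : ℝ) ^ j * (lam - α) * (1 - α) ^ i * ((i + 1).choose j : ℝ)) * y ^ (j + 1) :=
  gmo_transform_iterated_series_general α lam y hα hy
end

section
/- For α ∈ (0,1], λ ∈ [0,1], τ > 0, β > 0, and x > 0, the GMOL cumulative distribution function admits the convergent mixture representation F(x) = G(x) + (λ - α) Σ_{i=0}^∞ (1-α)^i G(x) (1 - G(x))^{i+1}, where G(x) = 1 - (β/(β+x))^τ is the Lomax(τ,β) CDF. -/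
/-! The mixture series is geometric with ratio `(1 - α)(1 - G)`, which lies in `[0, 1)` because
`G ∈ (0, 1)`; its sum is `G (1 - G) / (1 - (1 - α)(1 - G))`, and the GMO denominator
`α + (1 - α) G` is exactly `1 - (1 - α)(1 - G)`, so the claim is an identity of rational functions. -/

open Set

theorem hasSum_gmo_mixture {α y : ℝ} (hr : |(1 - α) * (1 - y)| < 1) :
    HasSum (fun i : ℕ => (1 - α) ^ i * y * (1 - y) ^ (i + 1))
      (y * (1 - y) / (1 - (1 - α) * (1 - y))) := by
  have hterm : (fun i : ℕ => (1 - α) ^ i * y * (1 - y) ^ (i + 1)) =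
      fun i : ℕ => y * (1 - y) * ((1 - α) * (1 - y)) ^ i := by
    funext i
    rw [mul_pow, pow_succ]
    ring
  rw [hterm, div_eq_mul_inv]
  exact (hasSum_geometric_of_abs_lt_one hr).mul_left _

theorem gmo_transform_eq_add_mul_div {α lam y : ℝ} (hD : α + (1 - α) * y ≠ 0) :
    (lam * y + (1 - lam) * y ^ 2) / (α + (1 - α) * y) =
      y + (lam - α) * (y * (1 - y) / (1 - (1 - α) * (1 - y))) := by
  have hD' : 1 - (1 - α) * (1 - y) = α + (1 - α) * y := by ring
  rw [hD', mul_div_assoc', add_div' _ _ _ hD]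
  ring

theorem lomax_cdf_mem_Ioo {τ β x : ℝ} (hτ : 0 < τ) (hβ : 0 < β) (hx : 0 < x) :
    1 - (β / (β + x)) ^ τ ∈ Ioo 0 1 := by
  have hb : 0 < β / (β + x) := by positivity
  have hb1 : β / (β + x) < 1 := (div_lt_one (by positivity)).2 (by linarith)
  constructor
  · linarith [Real.rpow_lt_one hb.le hb1 hτ]
  · linarith [Real.rpow_pos_of_pos hb τ]

theorem gmol_cdf_mixture_general (α lam τ β x : ℝ) (hα : α ∈ Set.Ioc (0 : ℝ) 1)
    (hτ : 0 < τ) (hβ : 0 < β) (hx : 0 < x) :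
    Summable (fun i : ℕ =>
      (1 - α) ^ i * (1 - (β / (β + x)) ^ τ) * (1 - (1 - (β / (β + x)) ^ τ)) ^ (i + 1)) ∧
    (lam * (1 - (β / (β + x)) ^ τ) + (1 - lam) * (1 - (β / (β + x)) ^ τ) ^ 2) /
        (α + (1 - α) * (1 - (β / (β + x)) ^ τ)) =
      (1 - (β / (β + x)) ^ τ) + (lam - α) *
        ∑' i : ℕ,
          (1 - α) ^ i * (1 - (β / (β + x)) ^ τ) * (1 - (1 - (β / (β + x)) ^ τ)) ^ (i + 1) := by
  obtain ⟨hα0, hα1⟩ := hα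
  obtain ⟨hG0, hG1⟩ := lomax_cdf_mem_Ioo hτ hβ hx
  set G := 1 - (β / (β + x)) ^ τ
  have hr : |(1 - α) * (1 - G)| < 1 := by
    rw [abs_of_nonneg (by nlinarith)]
    nlinarith
  have hD : α + (1 - α) * G ≠ 0 := by nlinarith
  have hsum := hasSum_gmo_mixture hr
  exact ⟨hsum.summable, by rw [hsum.tsum_eq, gmo_transform_eq_add_mul_div hD]⟩

/-- For α ∈ (0,1], λ ∈ [0,1], τ > 0, β > 0, x > 0, the GMOL CDF admits the
convergent mixture representation
F(x) = G(x) + (λ-α) Σ_i (1-α)^i G(x)(1-G(x))^(i+1), where G is the Lomax CDF. -/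
theorem gmol_cdf_mixture (α lam τ β x : ℝ) (hα : α ∈ Set.Ioc (0 : ℝ) 1)
    (hlam : lam ∈ Set.Icc (0 : ℝ) 1) (hτ : 0 < τ) (hβ : 0 < β) (hx : 0 < x) :
    Summable (fun i : ℕ =>
      (1 - α) ^ i * (1 - (β / (β + x)) ^ τ) * (1 - (1 - (β / (β + x)) ^ τ)) ^ (i + 1)) ∧
    (lam * (1 - (β / (β + x)) ^ τ) + (1 - lam) * (1 - (β / (β + x)) ^ τ) ^ 2) /
        (α + (1 - α) * (1 - (β / (β + x)) ^ τ)) =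
      (1 - (β / (β + x)) ^ τ) + (lam - α) *
        ∑' i : ℕ,
          (1 - α) ^ i * (1 - (β / (β + x)) ^ τ) * (1 - (1 - (β / (β + x)) ^ τ)) ^ (i + 1) :=
  gmol_cdf_mixture_general α lam τ β x hα hτ hβ hx
end

section
/- For α ∈ (0,1], λ ∈ [0,1), τ > 0, β > 0, and u ∈ (0,1), the quantile Q(u) = β ( { 1 - [ ((1-α) u - λ + √( (λ - (1-α) u)² + 4 α (1-λ) u )) / (2 (1-λ)) ] }^{-1/τ} - 1 ) is strictly positive and satisfies F(Q(u)) = u, where F is the GMOL(α,λ,τ,β) cumulative distribution function. -/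
/-!
Write `y = G(Q)` for the Lomax CDF. The GMO equation `T(y) = u` clears to the quadratic
`(1 - λ) y² + (λ - (1 - α) u) y = α u`, whose polynomial is negative at `0` and equal to `1 - u > 0`
at `1`; so its larger root `y`, the bracket in `Q(u)`, lies in `(0, 1)`. Inverting the Lomax CDF at
this `y` gives exactly `Q(u)`, which is positive because `y > 0`.
-/

open Set

theorem quadratic_larger_root_eq {a b k : ℝ} (ha : a ≠ 0) (hD : 0 ≤ b ^ 2 + 4 * a * k) :
    a * ((-b + √(b ^ 2 + 4 * a * k)) / (2 * a)) ^ 2 + b * ((-b + √(b ^ 2 + 4 * a * k)) / (2 * a))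
      = k := by
  have hs := Real.sq_sqrt hD
  set s := √(b ^ 2 + 4 * a * k)
  field_simp
  linear_combination hs

theorem quadratic_larger_root_mem_Ioo {a b k : ℝ} (ha : 0 < a) (hk : 0 < k) (hab : k < a + b) :
    (-b + √(b ^ 2 + 4 * a * k)) / (2 * a) ∈ Ioo 0 1 := by
  have h2a : 0 < 2 * a := by positivity
  have habs : |b| < √(b ^ 2 + 4 * a * k) :=
    (Real.lt_sqrt (abs_nonneg b)).2 (by rw [sq_abs]; nlinarith)
  have hlt : √(b ^ 2 + 4 * a * k) < 2 * a + b :=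
    (Real.sqrt_lt' (by linarith)).2 (by nlinarith)
  constructor
  · exact div_pos (by linarith [le_abs_self b]) h2a
  · rw [div_lt_one h2a]
    linarith

theorem lomax_quantile_pos {τ β t : ℝ} (hτ : 0 < τ) (hβ : 0 < β) (ht0 : 0 < t) (ht1 : t < 1) :
    0 < β * (t ^ (-1 / τ) - 1) := by
  have : 1 < t ^ (-1 / τ) :=
    Real.one_lt_rpow_of_pos_of_lt_one_of_neg ht0 ht1 (div_neg_of_neg_of_pos (by norm_num) hτ)
  exact mul_pos hβ (by linarith)

theorem lomax_survival_quantile {τ β t : ℝ} (hτ : 0 < τ) (hβ : 0 < β) (ht0 : 0 < t) :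
    (β / (β + β * (t ^ (-1 / τ) - 1))) ^ τ = t := by
  have hw : 0 < t ^ (-1 / τ) := Real.rpow_pos_of_pos ht0 _
  rw [show β + β * (t ^ (-1 / τ) - 1) = β * t ^ (-1 / τ) by ring, div_mul_cancel_left₀ hβ.ne',
    ← Real.rpow_neg_one, ← Real.rpow_mul hw.le, ← Real.rpow_mul ht0.le]
  field_simp
  simp

theorem gmo_transform_eq_of_quadratic {α lam u y : ℝ} (hden : α + (1 - α) * y ≠ 0)
    (h : (1 - lam) * y ^ 2 + (lam - (1 - α) * u) * y = α * u) :
    (lam * y + (1 - lam) * y ^ 2) / (α + (1 - α) * y) = u := by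
  rw [div_eq_iff hden]
  linear_combination h

/-- For α ∈ (0,1], λ ∈ [0,1), τ > 0, β > 0, u ∈ (0,1), the quantile
Q(u) = β({1 - [((1-α)u - λ + √((λ-(1-α)u)² + 4α(1-λ)u))/(2(1-λ))]}^(-1/τ) - 1)
is strictly positive and satisfies F(Q(u)) = u, where F is the GMOL CDF. -/
theorem gmol_quantile (α lam τ β u : ℝ) (hα : α ∈ Set.Ioc (0 : ℝ) 1)
    (hlam : lam ∈ Set.Ico (0 : ℝ) 1) (hτ : 0 < τ) (hβ : 0 < β)
    (hu : u ∈ Set.Ioo (0 : ℝ) 1) (Q : ℝ)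
    (hQ : Q = β * ((1 - ((1 - α) * u - lam +
        Real.sqrt ((lam - (1 - α) * u) ^ 2 + 4 * α * (1 - lam) * u)) /
          (2 * (1 - lam))) ^ (-1 / τ) - 1)) :
    0 < Q ∧
    (lam * (1 - (β / (β + Q)) ^ τ) + (1 - lam) * (1 - (β / (β + Q)) ^ τ) ^ 2) /
      (α + (1 - α) * (1 - (β / (β + Q)) ^ τ)) = u := by
  obtain ⟨hα0, hα1⟩ := hα
  obtain ⟨hlam0, hlam1⟩ := hlam
  obtain ⟨hu0, hu1⟩ := hu
  rw [show (1 - α) * u - lam = -(lam - (1 - α) * u) by ring,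
    show 4 * α * (1 - lam) * u = 4 * (1 - lam) * (α * u) by ring] at hQ
  set y := (-(lam - (1 - α) * u) + √((lam - (1 - α) * u) ^ 2 + 4 * (1 - lam) * (α * u))) /
    (2 * (1 - lam))
  have ha : 0 < 1 - lam := by linarith
  have hk : 0 < α * u := by positivity
  obtain ⟨hy0, hy1⟩ : y ∈ Ioo 0 1 := quadratic_larger_root_mem_Ioo ha hk (by linarith)
  have hQpos := lomax_quantile_pos hτ hβ (sub_pos.2 hy1) (by linarith : 1 - y < 1)
  have hsurv := lomax_survival_quantile hτ hβ (sub_pos.2 hy1)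
  rw [← hQ] at hQpos hsurv
  refine ⟨hQpos, ?_⟩
  rw [hsurv, sub_sub_cancel]
  have hden : 0 < α + (1 - α) * y := by nlinarith
  exact gmo_transform_eq_of_quadratic hden.ne'
    (quadratic_larger_root_eq ha.ne' (by nlinarith [sq_nonneg (lam - (1 - α) * u)]))
end

section
/- For α ∈ (0,1], λ ∈ [0,1], τ > 0, β > 0, and real p with 0 ≤ p < τ, the p-th moment of the GMOL(α,λ,τ,β) distribution is finite: ∫₀^∞ x^p · τ β^τ (β+x)^{-(τ+1)} · [(1-α)(1-λ) G(x)² + 2 α (1-λ) G(x) + α λ] / (α + (1-α) G(x))² dx < ∞, where G(x) = 1 - (β/(β+x))^τ. -/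
open MeasureTheory Set

/-! The GMOL density is the Lomax density `τ β^τ (β+x)^(-(τ+1))` times the weight
`N(G)/D(G)` evaluated at the Lomax CDF `G ∈ [0,1]`; on `[0,1]` the numerator is at most `2` and
the denominator at least `α²`. So the `p`-th moment is dominated by a multiple of
`∫₀^∞ x^p (β+x)^(-(τ+1)) dx ≤ ∫₀^∞ (β+x)^(p-τ-1) dx`, which is finite exactly when `p < τ`. -/

theorem one_sub_div_add_rpow_mem_Icc {τ β x : ℝ} (hτ : 0 ≤ τ) (hβ : 0 ≤ β) (hx : 0 ≤ x) :
    1 - (β / (β + x)) ^ τ ∈ Icc (0 : ℝ) 1 := by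
  have hratio : β / (β + x) ∈ Icc (0 : ℝ) 1 :=
    ⟨by positivity, div_le_one_of_le₀ (by linarith) (by positivity)⟩
  have hpow_nonneg := Real.rpow_nonneg hratio.1 τ
  have hpow_le_one := Real.rpow_le_one hratio.1 hratio.2 hτ
  constructor <;> linarith

theorem gmol_weight_le {α lam G : ℝ} (hα : α ∈ Ioc (0 : ℝ) 1) (hlam : lam ∈ Icc (0 : ℝ) 1)
    (hG : G ∈ Icc (0 : ℝ) 1) :
    ((1 - α) * (1 - lam) * G ^ 2 + 2 * α * (1 - lam) * G + α * lam) /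
      (α + (1 - α) * G) ^ 2 ≤ 2 / α ^ 2 := by
  obtain ⟨hα0, hα1⟩ := hα
  obtain ⟨hlam0, hlam1⟩ := hlam
  obtain ⟨hG0, hG1⟩ := hG
  have hnum : (1 - α) * (1 - lam) * G ^ 2 + 2 * α * (1 - lam) * G + α * lam ≤ 2 := by
    have hquad : (1 - α) * G ^ 2 + 2 * α * G ≤ 1 + α := by
      nlinarith [mul_nonneg (sub_nonneg.mpr hα1) (mul_nonneg hG0 (sub_nonneg.mpr hG1)),
        mul_nonneg (by linarith : 0 ≤ 1 + α) (sub_nonneg.mpr hG1)]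
    nlinarith [mul_le_mul_of_nonneg_left hquad (sub_nonneg.mpr hlam1)]
  have hden : α ^ 2 ≤ (α + (1 - α) * G) ^ 2 :=
    pow_le_pow_left₀ hα0.le (le_add_of_nonneg_right (by nlinarith)) 2
  exact div_le_div₀ zero_le_two hnum (by positivity) hden

theorem integrableOn_rpow_mul_add_rpow_Ioi {p s β : ℝ} (hp : 0 ≤ p) (hps : p + s < -1)
    (hβ : 0 < β) : IntegrableOn (fun x : ℝ ↦ x ^ p * (β + x) ^ s) (Ioi 0) := by
  have htail : IntegrableOn (fun x : ℝ ↦ (x + β) ^ (p + s)) (Ioi 0) :=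
    integrableOn_add_rpow_Ioi_of_lt hps (by linarith)
  refine htail.mono' (by fun_prop) ?_
  filter_upwards [ae_restrict_mem measurableSet_Ioi] with x (hx : 0 < x)
  have hβx : 0 < β + x := by linarith
  rw [Real.norm_of_nonneg (by positivity), add_comm x β, Real.rpow_add hβx]
  gcongr
  linarith

/-- For α ∈ (0,1], λ ∈ [0,1], τ > 0, β > 0, and 0 ≤ p < τ, the p-th moment of the
GMOL(α,λ,τ,β) distribution is finite. -/
theorem gmol_moment_finite (α lam τ β p : ℝ) (hα : α ∈ Set.Ioc (0 : ℝ) 1)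
    (hlam : lam ∈ Set.Icc (0 : ℝ) 1) (hτ : 0 < τ) (hβ : 0 < β) (hp : 0 ≤ p) (hpτ : p < τ) :
    ∫⁻ x in Set.Ioi (0 : ℝ),
      ENNReal.ofReal (x ^ p * (τ * β ^ τ * (β + x) ^ (-(τ + 1)) *
        (((1 - α) * (1 - lam) * (1 - (β / (β + x)) ^ τ) ^ 2 +
            2 * α * (1 - lam) * (1 - (β / (β + x)) ^ τ) + α * lam) /
          (α + (1 - α) * (1 - (β / (β + x)) ^ τ)) ^ 2))) < ⊤ := by
  have hmoment := (integrableOn_rpow_mul_add_rpow_Ioi hp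
    (show p + -(τ + 1) < -1 by linarith) hβ).const_mul (τ * β ^ τ * (2 / α ^ 2))
  refine lt_of_le_of_lt (setLIntegral_mono' measurableSet_Ioi fun x (hx : 0 < x) ↦
    ENNReal.ofReal_le_ofReal ?_) hmoment.lintegral_lt_top
  have hG := one_sub_div_add_rpow_mem_Icc hτ.le hβ.le hx.le
  calc _ ≤ x ^ p * (τ * β ^ τ * (β + x) ^ (-(τ + 1)) * (2 / α ^ 2)) := by
        gcongr x ^ p * (_ * ?_)
        exact gmol_weight_le hα hlam hG
    _ = _ := by ring
end
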